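/- arXiv:2312.03269 — 3 statements merged into one kernel-verified Lean document; each statement's English description precedes it below -/
import Mathlib

section
/- For 0 < α < 1/2, ∫_0^1 (1 - n^α)/(1-n)^{α+1} dn = (Γ(1+α) Γ(1-α) - 1)/α. -/
open MeasureTheory intervalIntegral Real Set Filter Topology

/-!
The function `F x = (x ^ α - 1) * (1 - x) ^ (-α) / α` satisfies
`F' x = x ^ (α - 1) * (1 - x) ^ (-α) - (1 - x ^ α) / (1 - x) ^ (α + 1)` on `(0, 1)`, with
`F → -1/α` at `0` and `F → 0` at `1` (as `0 ≤ 1 - x ^ α ≤ 1 - x`). The first term of `F'`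
integrates to the Beta value `B(α, 1 - α) = Γ(α) Γ(1 - α)`, so the integral equals
`Γ(α) Γ(1 - α) - 1/α`, and `α Γ(α) = Γ(1 + α)`.
-/

section BetaIntegral

variable {u v : ℝ}

lemma ofReal_rpow_mul_one_sub_rpow {x : ℝ} (hx : x ∈ Icc (0 : ℝ) 1) :
    ((x ^ (u - 1) * (1 - x) ^ (v - 1) : ℝ) : ℂ) =
      (x : ℂ) ^ ((u : ℂ) - 1) * (1 - (x : ℂ)) ^ ((v : ℂ) - 1) := by
  push_cast [Complex.ofReal_cpow hx.1, Complex.ofReal_cpow (sub_nonneg.2 hx.2)]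
  rfl

lemma intervalIntegrable_rpow_mul_one_sub_rpow (hu : 0 < u) (hv : 0 < v) :
    IntervalIntegrable (fun x : ℝ ↦ x ^ (u - 1) * (1 - x) ^ (v - 1)) volume 0 1 := by
  have hB := Complex.betaIntegral_convergent (u := u) (v := v) (by simpa) (by simpa)
  rw [intervalIntegrable_iff_integrableOn_Icc_of_le zero_le_one] at hB ⊢
  refine IntegrableOn.congr_fun hB.re (fun x hx ↦ ?_) measurableSet_Icc
  simp [← ofReal_rpow_mul_one_sub_rpow hx]

lemma integral_rpow_mul_one_sub_rpow (hu : 0 < u) (hv : 0 < v) :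
    ∫ x in (0 : ℝ)..1, x ^ (u - 1) * (1 - x) ^ (v - 1) = Gamma u * Gamma v / Gamma (u + v) := by
  have hB := Complex.betaIntegral_eq_Gamma_mul_div (u := u) (v := v) (by simpa) (by simpa)
  rw [Complex.betaIntegral, ← Complex.ofReal_add, Complex.Gamma_ofReal, Complex.Gamma_ofReal,
    Complex.Gamma_ofReal] at hB
  refine Complex.ofReal_injective ?_
  rw [← intervalIntegral.integral_ofReal, integral_congr fun x hx ↦
    ofReal_rpow_mul_one_sub_rpow (by rwa [uIcc_of_le zero_le_one] at hx), hB]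
  push_cast; rfl

end BetaIntegral

section Antiderivative

variable {α x : ℝ}

lemma one_sub_rpow_mem_Icc (hα : 0 ≤ α) (hα1 : α ≤ 1) (hx : x ∈ Icc (0 : ℝ) 1) :
    1 - x ^ α ∈ Icc 0 (1 - x) :=
  ⟨sub_nonneg.2 (rpow_le_one hx.1 hx.2 hα),
    sub_le_sub_left (self_le_rpow_of_le_one hx.1 hx.2 hα1) 1⟩

lemma one_sub_rpow_div_le (hα : 0 ≤ α) (hα1 : α ≤ 1) (hx : x ∈ Ico (0 : ℝ) 1) :
    (1 - x ^ α) / (1 - x) ^ (α + 1) ≤ (1 - x) ^ (-α) := by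
  have h1x : 0 < 1 - x := sub_pos.2 hx.2
  rw [div_le_iff₀ (rpow_pos_of_pos h1x _), ← rpow_add h1x, neg_add_cancel_left, rpow_one]
  exact (one_sub_rpow_mem_Icc hα hα1 (Ico_subset_Icc_self hx)).2

lemma intervalIntegrable_one_sub_rpow_div (hα : 0 ≤ α) (hα1 : α < 1) :
    IntervalIntegrable (fun x : ℝ ↦ (1 - x ^ α) / (1 - x) ^ (α + 1)) volume 0 1 := by
  have hdom : IntervalIntegrable (fun x : ℝ ↦ (1 - x) ^ (-α)) volume 0 1 := by
    simpa using ((intervalIntegrable_rpow' (a := 0) (b := 1) (r := -α) (by linarith)).comp_sub_left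
      1).symm
  rw [intervalIntegrable_iff_integrableOn_Ico_of_le zero_le_one] at hdom ⊢
  refine hdom.mono' (Measurable.aestronglyMeasurable (by fun_prop))
    ((ae_restrict_iff' measurableSet_Ico).2 (.of_forall fun x hx ↦ ?_))
  have h1x : 0 < 1 - x := sub_pos.2 hx.2
  rw [norm_of_nonneg (div_nonneg (one_sub_rpow_mem_Icc hα hα1.le (Ico_subset_Icc_self hx)).1
    (rpow_nonneg h1x.le _))]
  exact one_sub_rpow_div_le hα hα1.le hx

lemma hasDerivAt_rpow_sub_one_mul_one_sub_rpow (hα : α ≠ 0) (hx : x ∈ Ioo (0 : ℝ) 1) :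
    HasDerivAt (fun y ↦ (y ^ α - 1) * (1 - y) ^ (-α) / α)
      (x ^ (α - 1) * (1 - x) ^ (-α) - (1 - x ^ α) / (1 - x) ^ (α + 1)) x := by
  have h1x : 0 < 1 - x := sub_pos.2 hx.2
  have hpow := (hasDerivAt_rpow_const (p := α) (.inl hx.1.ne')).sub_const 1
  have hpow' := ((hasDerivAt_id' x).const_sub 1).rpow_const (p := -α) (.inl h1x.ne')
  refine ((hpow.mul hpow').div_const α).congr_deriv ?_
  rw [rpow_sub_one h1x.ne', rpow_add_one h1x.ne', rpow_neg h1x.le]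
  field_simp
  ring

lemma tendsto_rpow_sub_one_mul_one_sub_rpow_nhdsGT_zero (hα : 0 < α) :
    Tendsto (fun y ↦ (y ^ α - 1) * (1 - y) ^ (-α) / α) (𝓝[>] 0) (𝓝 (-α⁻¹)) := by
  have hc : ContinuousAt (fun y : ℝ ↦ (y ^ α - 1) * (1 - y) ^ (-α) / α) 0 := by
    fun_prop (disch := first | exact Or.inr hα.le | exact hα.ne' | norm_num)
  simpa [zero_rpow hα.ne', neg_div] using hc.tendsto.mono_left nhdsWithin_le_nhds

lemma tendsto_rpow_sub_one_mul_one_sub_rpow_nhdsLT_one (hα : 0 < α) (hα1 : α < 1) :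
    Tendsto (fun y ↦ (y ^ α - 1) * (1 - y) ^ (-α) / α) (𝓝[<] 1) (𝓝 0) := by
  have hbound : Tendsto (fun y : ℝ ↦ (1 - y) ^ (1 - α) / α) (𝓝[<] 1) (𝓝 0) := by
    have hc : ContinuousAt (fun y : ℝ ↦ (1 - y) ^ (1 - α) / α) 1 := by
      fun_prop (disch := first | exact Or.inr (by linarith) | exact hα.ne')
    simpa [zero_rpow (sub_pos.2 hα1).ne'] using hc.tendsto.mono_left nhdsWithin_le_nhds
  refine squeeze_zero_norm' ?_ hbound
  filter_upwards [Ioo_mem_nhdsLT zero_lt_one] with x hx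
  have h1x : 0 < 1 - x := sub_pos.2 hx.2
  obtain ⟨hlo, hhi⟩ := one_sub_rpow_mem_Icc hα.le hα1.le (Ioo_subset_Icc_self hx)
  rw [norm_div, norm_mul, norm_of_nonneg (rpow_nonneg h1x.le _), norm_of_nonneg hα.le,
    norm_of_nonpos (by linarith), sub_eq_add_neg (1 : ℝ) α, rpow_add h1x, rpow_one]
  gcongr
  linarith

end Antiderivative

theorem integral_one_sub_rpow_div (α : ℝ) (hα : 0 < α) (hα2 : α < 1/2) :
    ∫ n in (0:ℝ)..1, (1 - n ^ α) / (1 - n) ^ (α + 1) =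
      (Real.Gamma (1 + α) * Real.Gamma (1 - α) - 1) / α := by
  have hα1 : α < 1 := by linarith
  have hbeta := integral_rpow_mul_one_sub_rpow hα (sub_pos.2 hα1)
  have hbeta_int := intervalIntegrable_rpow_mul_one_sub_rpow hα (sub_pos.2 hα1)
  simp only [add_sub_cancel, sub_sub_cancel_left, Gamma_one, div_one] at hbeta hbeta_int
  have hf_int := intervalIntegrable_one_sub_rpow_div hα.le hα1
  have hftc := integral_eq_sub_of_hasDerivAt_of_tendsto zero_lt_one
    (fun x hx ↦ hasDerivAt_rpow_sub_one_mul_one_sub_rpow hα.ne' hx) (hbeta_int.sub hf_int)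
    (tendsto_rpow_sub_one_mul_one_sub_rpow_nhdsGT_zero hα)
    (tendsto_rpow_sub_one_mul_one_sub_rpow_nhdsLT_one hα hα1)
  rw [integral_sub hbeta_int hf_int, hbeta] at hftc
  have hf : ∫ x in (0 : ℝ)..1, (1 - x ^ α) / (1 - x) ^ (α + 1) =
      Gamma α * Gamma (1 - α) - α⁻¹ := by
    linarith
  rw [hf, add_comm 1 α, Gamma_add_one hα.ne']
  field_simp
end

section
/- Let σ: ℝ² → ℝ be Lipschitz with constant L₁, and let X_t = x + ∫_0^t σ(X_s, Y_s) ds, φ⁽¹⁾_t = x + ∫_0^t σ(φ⁽¹⁾_s, φ⁽²⁾_s) ds on [0,1] for continuous Y, φ⁽²⁾. Then for 0 < β < 1 the β-Hölder seminorm satisfies ‖X - φ⁽¹⁾‖_β ≤ C(L₁) ‖Y - φ⁽²⁾‖_β, where ‖f‖_β = sup_{s≠t} |f_t - f_s|/|t-s|^β. -/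
/-!
Only `|(Y - φ₂) u|` enters the Lipschitz bound, and since `Y - φ₂` vanishes at `0` its
`β`-Hölder constant `K` bounds it on `[0, 1]`. Grönwall's inequality applied to
`D = X - φ₁ = ∫₀ᵗ (σ (X, Y) - σ (φ₁, φ₂))` then gives `|D| ≤ K (exp L₁ - 1)`, so the integrand is
bounded by `L₁ K exp L₁`. Hence `D` is `L₁ K exp L₁`-Lipschitz on `[0, 1]`, and a Lipschitz bound
dominates a `β`-Hölder one there because `|v - u| ≤ 1`.
-/

open MeasureTheory intervalIntegral

lemma continuous_of_abs_sub_le_mul_abs_add_abs {L : ℝ} (hL : 0 ≤ L) {σ : ℝ × ℝ → ℝ}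
    (hσ : ∀ p q : ℝ × ℝ, |σ p - σ q| ≤ L * (|p.1 - q.1| + |p.2 - q.2|)) : Continuous σ := by
  refine (LipschitzWith.of_dist_le_mul (K := (2 * L).toNNReal) fun p q => ?_).continuous
  rw [Real.coe_toNNReal _ (by positivity), Real.dist_eq, Prod.dist_eq, Real.dist_eq,
    Real.dist_eq]
  have h₁ := le_max_left |p.1 - q.1| |p.2 - q.2|
  have h₂ := le_max_right |p.1 - q.1| |p.2 - q.2|
  nlinarith [hσ p q]

lemma abs_le_of_abs_sub_le_mul_rpow {f : ℝ → ℝ} {K β : ℝ} (hK : 0 ≤ K) (hβ : 0 ≤ β)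
    (hf₀ : f 0 = 0)
    (hf : ∀ u ∈ Set.Icc (0:ℝ) 1, ∀ v ∈ Set.Icc (0:ℝ) 1, |f v - f u| ≤ K * |v - u| ^ β) :
    ∀ s ∈ Set.Icc (0:ℝ) 1, |f s| ≤ K := by
  intro s hs
  have hs_rpow : |s - 0| ^ β ≤ 1 := by
    rw [sub_zero, abs_of_nonneg hs.1]
    exact Real.rpow_le_one hs.1 hs.2 hβ
  calc |f s| = |f s - f 0| := by rw [hf₀, sub_zero]
    _ ≤ K * |s - 0| ^ β := hf 0 ⟨le_rfl, zero_le_one⟩ s hs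
    _ ≤ K := mul_le_of_le_one_right hK hs_rpow

lemma norm_le_mul_exp_sub_one_of_norm_deriv_le {E : Type*} [NormedAddCommGroup E]
    [NormedSpace ℝ E] {f f' : ℝ → E} {L K a b : ℝ} (hf : ContinuousOn f (Set.Icc a b))
    (hf' : ∀ t ∈ Set.Ico a b, HasDerivWithinAt f (f' t) (Set.Ici t) t) (ha : f a = 0)
    (bound : ∀ t ∈ Set.Ico a b, ‖f' t‖ ≤ L * (‖f t‖ + K)) :
    ∀ t ∈ Set.Icc a b, ‖f t‖ ≤ K * (Real.exp (L * (t - a)) - 1) := by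
  intro t ht
  refine (norm_le_gronwallBound_of_norm_deriv_right_le (δ := 0) hf hf' (by simp [ha])
    (fun s hs => (bound s hs).trans_eq (mul_add _ _ _)) t ht).trans_eq ?_
  rcases eq_or_ne L 0 with rfl | hL
  · simp [gronwallBound_K0]
  · rw [gronwallBound_of_K_ne_0 hL]
    field_simp
    ring

lemma abs_le_mul_mul_exp_of_abs_le_mul_abs_integral_add {g : ℝ → ℝ} {L K : ℝ} (hL : 0 ≤ L)
    (hK : 0 ≤ K) (hg : Continuous g)
    (hg_le : ∀ s ∈ Set.Icc (0:ℝ) 1, |g s| ≤ L * (|∫ r in (0:ℝ)..s, g r| + K)) :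
    ∀ s ∈ Set.Icc (0:ℝ) 1, |g s| ≤ L * K * Real.exp L := by
  have hD' : ∀ t, HasDerivAt (fun t => ∫ r in (0:ℝ)..t, g r) (g t) t := fun t =>
    integral_hasDerivAt_right (hg.intervalIntegrable 0 t) (hg.stronglyMeasurableAtFilter _ _)
      hg.continuousAt
  have hD_le : ∀ s ∈ Set.Icc (0:ℝ) 1, |∫ r in (0:ℝ)..s, g r| ≤ K * (Real.exp (L * s) - 1) := by
    simpa using norm_le_mul_exp_sub_one_of_norm_deriv_le
      (fun s _ => (hD' s).continuousAt.continuousWithinAt) (fun s _ => (hD' s).hasDerivWithinAt)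
      integral_same (fun s hs => hg_le s (Set.Ico_subset_Icc_self hs))
  intro s hs
  have hexp : Real.exp (L * s) ≤ Real.exp L := Real.exp_le_exp.2 (mul_le_of_le_one_right hL hs.2)
  calc |g s| ≤ L * (K * (Real.exp (L * s) - 1) + K) :=
        (hg_le s hs).trans (by gcongr; exact hD_le s hs)
    _ ≤ L * K * Real.exp L := by nlinarith [mul_le_mul_of_nonneg_left hexp (mul_nonneg hL hK)]

lemma abs_integral_le_mul_abs_sub_rpow {g : ℝ → ℝ} {M β u v : ℝ} (hM : 0 ≤ M) (hβ : β ≤ 1)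
    (hg : ∀ s ∈ Set.Icc (0:ℝ) 1, |g s| ≤ M) (hu : u ∈ Set.Icc (0:ℝ) 1)
    (hv : v ∈ Set.Icc (0:ℝ) 1) :
    |∫ s in u..v, g s| ≤ M * |v - u| ^ β := by
  have hvu : |v - u| ≤ 1 := abs_sub_le_iff.2 ⟨by linarith [hv.2, hu.1], by linarith [hu.2, hv.1]⟩
  calc |∫ s in u..v, g s| ≤ M * |v - u| :=
        norm_integral_le_of_norm_le_const (f := g) fun s hs =>
          hg s (Set.uIcc_subset_Icc hu hv (Set.uIoc_subset_uIcc hs))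
    _ ≤ M * |v - u| ^ β :=
        mul_le_mul_of_nonneg_left (Real.self_le_rpow_of_le_one (abs_nonneg _) hvu hβ) hM

theorem holder_seminorm_comparison_degenerate
    (L₁ β : ℝ) (hL : 0 ≤ L₁) (hβ : 0 < β) (hβ1 : β < 1) :
    ∃ C : ℝ, 0 < C ∧
      ∀ (σ : ℝ × ℝ → ℝ),
        (∀ p q : ℝ × ℝ, |σ p - σ q| ≤ L₁ * (|p.1 - q.1| + |p.2 - q.2|)) →
      ∀ (x : ℝ) (X Y φ₁ φ₂ : ℝ → ℝ),
        Continuous X → Continuous Y → Continuous φ₁ → Continuous φ₂ →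
        (∀ t ∈ Set.Icc (0:ℝ) 1, X t = x + ∫ s in (0:ℝ)..t, σ (X s, Y s)) →
        (∀ t ∈ Set.Icc (0:ℝ) 1, φ₁ t = x + ∫ s in (0:ℝ)..t, σ (φ₁ s, φ₂ s)) →
        Y 0 = φ₂ 0 →
        ∀ K : ℝ, 0 ≤ K →
          (∀ u ∈ Set.Icc (0:ℝ) 1, ∀ v ∈ Set.Icc (0:ℝ) 1,
            |(Y v - φ₂ v) - (Y u - φ₂ u)| ≤ K * |v - u| ^ β) →
          ∀ u ∈ Set.Icc (0:ℝ) 1, ∀ v ∈ Set.Icc (0:ℝ) 1,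
            |(X v - φ₁ v) - (X u - φ₁ u)| ≤ C * K * |v - u| ^ β := by
  refine ⟨L₁ * Real.exp L₁ + 1, by positivity, ?_⟩
  intro σ hσ x X Y φ₁ φ₂ hXc hYc hφ₁c hφ₂c hX hφ₁ hY0 K hK hE u hu v hv
  have hσc := continuous_of_abs_sub_le_mul_abs_add_abs hL hσ
  have hσXY : Continuous fun s => σ (X s, Y s) := hσc.comp (hXc.prodMk hYc)
  have hσφ : Continuous fun s => σ (φ₁ s, φ₂ s) := hσc.comp (hφ₁c.prodMk hφ₂c)
  set g : ℝ → ℝ := fun s => σ (X s, Y s) - σ (φ₁ s, φ₂ s)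
  have hgc : Continuous g := hσXY.sub hσφ
  have hXφ₁ : ∀ t ∈ Set.Icc (0:ℝ) 1, X t - φ₁ t = ∫ s in (0:ℝ)..t, g s := fun t ht => by
    rw [hX t ht, hφ₁ t ht, add_sub_add_left_eq_sub,
      ← integral_sub (hσXY.intervalIntegrable 0 t) (hσφ.intervalIntegrable 0 t)]
  have hYφ₂ := abs_le_of_abs_sub_le_mul_rpow (f := Y - φ₂) hK hβ.le (sub_eq_zero.2 hY0) hE
  have hg_le : ∀ s ∈ Set.Icc (0:ℝ) 1, |g s| ≤ L₁ * (|∫ r in (0:ℝ)..s, g r| + K) :=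
    fun s hs => by
      rw [← hXφ₁ s hs]
      exact (hσ _ _).trans (by gcongr; exact hYφ₂ s hs)
  have hg_bound := abs_le_mul_mul_exp_of_abs_le_mul_abs_integral_add hL hK hgc hg_le
  rw [hXφ₁ u hu, hXφ₁ v hv, integral_interval_sub_left (hgc.intervalIntegrable 0 v)
    (hgc.intervalIntegrable 0 u)]
  calc |∫ s in u..v, g s| ≤ L₁ * K * Real.exp L₁ * |v - u| ^ β :=
        abs_integral_le_mul_abs_sub_rpow (by positivity) hβ1.le hg_bound hu hv
    _ ≤ (L₁ * Real.exp L₁ + 1) * K * |v - u| ^ β := by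
        rw [mul_right_comm L₁]
        gcongr
        exact le_add_of_nonneg_right zero_le_one
end

section
/- Let 0 < α < 1/2 and suppose b_y: ℝ² → ℝ is bounded by M. Define f(s,r) = (1/Γ(α)) s^{-α} ∫_r^s u^α b_y(φ_u) (s-u)^{α-1} K^H(u,r) du · 𝟙_{s ≥ r} on (0,1]² with K^H the kernel of fractional Brownian motion of Hurst index H = 1/2 - α, and let f̃ be the symmetrization of f. Then the trace of the associated integral operator K(f̃) on L²([0,1]) equals ∫_0^1 f̃(s,s) ds = (d_H/2) ∫_0^1 b_y(φ_s) ds, where d_H = c_H Γ(1-α) and c_H = (2HΓ(3/2-H)/(Γ(H+1/2)Γ(2-2H)))^{1/2}. -/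
/-!
For `r < s` the symmetrization is `f̃(s, r) = f(s, r) / 2`, and with `α = 1/2 - H` the kernel
splits as `K(u, r) = c_H (u - r)^(-α) + c_H α J(r, u)` with `|J(r, u)| ≤ (u - r)^(1-α) / ((1-α) r)`.
The first summand makes the integral defining `f(s, r)` an average of `u^α b_y(φ_u)` against the
Abel kernel `(s - u)^(α-1) (u - r)^(-α)`, whose mass on `[r, s]` is `B(α, 1 - α) = Γ(α) Γ(1 - α)`
whatever `r`; so it tends to `c_H Γ(α) Γ(1 - α) s^α b_y(φ_s)` as `r ↑ s`. The second summand
contributes `O((s - r) / r)`. Hence `f̃(s, s) = d_H b_y(φ_s) / 2` for every `s ∈ (0, 1]`.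
-/

open MeasureTheory intervalIntegral Filter Set Topology

lemma intervalIntegrable_sub_rpow {β : ℝ} (hβ : -1 < β) (c a b : ℝ) :
    IntervalIntegrable (fun u => (c - u) ^ β) volume a b := by
  simpa using (intervalIntegrable_rpow' (a := c - a) (b := c - b) hβ).comp_sub_left c

lemma intervalIntegrable_rpow_sub {β : ℝ} (hβ : -1 < β) (c a b : ℝ) :
    IntervalIntegrable (fun u => (u - c) ^ β) volume a b := by
  simpa using (intervalIntegrable_rpow' (a := a - c) (b := b - c) hβ).comp_sub_right c

lemma integral_sub_rpow {β r s : ℝ} (hβ : -1 < β) :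
    ∫ u in r..s, (s - u) ^ β = (s - r) ^ (β + 1) / (β + 1) := by
  rw [integral_comp_sub_left (fun x => x ^ β), sub_self, integral_rpow (Or.inl hβ),
    Real.zero_rpow (by linarith), sub_zero]

lemma integral_rpow_sub {β r s : ℝ} (hβ : -1 < β) :
    ∫ u in r..s, (u - r) ^ β = (s - r) ^ (β + 1) / (β + 1) := by
  rw [integral_comp_sub_right (fun x => x ^ β), sub_self, integral_rpow (Or.inl hβ),
    Real.zero_rpow (by linarith), sub_zero]

/-- The two singularities of the integrand sit at different endpoints, so each half of the
interval sees only one of them. -/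
lemma intervalIntegrable_sub_rpow_mul_rpow_sub {a b r s : ℝ} (ha : -1 < a) (hb : -1 < b)
    (hrs : r < s) :
    IntervalIntegrable (fun u => (s - u) ^ a * (u - r) ^ b) volume r s := by
  obtain ⟨m, hrm, hms⟩ := exists_between hrs
  refine IntervalIntegrable.trans (b := m) ?_ ?_
  · refine (intervalIntegrable_rpow_sub hb r r m).continuousOn_mul ?_
    refine ContinuousOn.rpow_const (by fun_prop) fun u hu => Or.inl ?_
    rw [uIcc_of_le hrm.le] at hu
    linarith [hu.2]
  · refine (intervalIntegrable_sub_rpow ha s m s).mul_continuousOn ?_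
    refine ContinuousOn.rpow_const (by fun_prop) fun u hu => Or.inl ?_
    rw [uIcc_of_le hms.le] at hu
    linarith [hu.1]

theorem integral_rpow_mul_one_sub_rpow_s12 {a b : ℝ} (ha : 0 < a) (hb : 0 < b) :
    ∫ t in (0:ℝ)..1, t ^ (a - 1) * (1 - t) ^ (b - 1)
      = Real.Gamma a * Real.Gamma b / Real.Gamma (a + b) := by
  have hB : Complex.betaIntegral a b = ↑(∫ t in (0:ℝ)..1, t ^ (a - 1) * (1 - t) ^ (b - 1)) := by
    rw [Complex.betaIntegral, ← intervalIntegral.integral_ofReal]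
    refine integral_congr fun t ht => ?_
    rw [uIcc_of_le zero_le_one] at ht
    push_cast [Complex.ofReal_cpow ht.1, Complex.ofReal_cpow (sub_nonneg.2 ht.2)]
    rfl
  have h := Complex.Gamma_mul_Gamma_eq_betaIntegral (s := a) (t := b) (by simpa) (by simpa)
  rw [hB, ← Complex.ofReal_add, Complex.Gamma_ofReal, Complex.Gamma_ofReal,
    Complex.Gamma_ofReal] at h
  norm_cast at h
  rw [h, mul_div_cancel_left₀ _ (Real.Gamma_pos_of_pos (add_pos ha hb)).ne']

noncomputable def abelKernel (α r s u : ℝ) : ℝ := (s - u) ^ (α - 1) * (u - r) ^ (-α)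

section abelKernel

variable {α : ℝ}

lemma intervalIntegrable_abelKernel (h0 : 0 < α) (h1 : α < 1) {r s : ℝ} (hrs : r < s) :
    IntervalIntegrable (abelKernel α r s) volume r s :=
  intervalIntegrable_sub_rpow_mul_rpow_sub (by linarith) (by linarith) hrs

lemma integral_abelKernel_zero_one (h0 : 0 < α) (h1 : α < 1) :
    ∫ t in (0:ℝ)..1, abelKernel α 0 1 t = Real.Gamma α * Real.Gamma (1 - α) := by
  have h := integral_rpow_mul_one_sub_rpow_s12 (sub_pos.2 h1) h0
  rw [sub_sub_cancel_left, sub_add_cancel, Real.Gamma_one, div_one, mul_comm] at h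
  simp only [abelKernel, sub_zero]
  rw [← h]
  exact integral_congr fun t _ => mul_comm _ _

lemma abelKernel_affine {r s t : ℝ} (hrs : r < s) (ht : t ∈ Icc (0:ℝ) 1) :
    abelKernel α r s (r + (s - r) * t) = (s - r)⁻¹ * abelKernel α 0 1 t := by
  have hsr : 0 < s - r := sub_pos.2 hrs
  have e1 : s - (r + (s - r) * t) = (s - r) * (1 - t) := by ring
  have e2 : r + (s - r) * t - r = (s - r) * t := by ring
  rw [abelKernel, abelKernel, e1, e2, sub_zero,
    Real.mul_rpow hsr.le (sub_nonneg.2 ht.2), Real.mul_rpow hsr.le ht.1, ← Real.rpow_neg_one,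
    show (-1 : ℝ) = (α - 1) + -α by ring, Real.rpow_add hsr]
  ring

lemma integral_mul_abelKernel_eq {r s : ℝ} (hrs : r < s) (g : ℝ → ℝ) :
    ∫ u in r..s, g u * abelKernel α r s u
      = ∫ t in (0:ℝ)..1, g (r + (s - r) * t) * abelKernel α 0 1 t := by
  have hsr : s - r ≠ 0 := (sub_pos.2 hrs).ne'
  have h := integral_comp_add_mul (fun u => g u * abelKernel α r s u) hsr r (a := 0) (b := 1)
  rw [mul_zero, add_zero, mul_one, add_sub_cancel, smul_eq_mul] at h
  rw [← mul_inv_cancel_left₀ hsr (∫ u in r..s, g u * abelKernel α r s u), ← h,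
    ← intervalIntegral.integral_const_mul]
  refine integral_congr fun t ht => ?_
  rw [uIcc_of_le zero_le_one] at ht
  simp only [abelKernel_affine hrs ht]
  field_simp

lemma tendsto_integral_mul_abelKernel (h0 : 0 < α) (h1 : α < 1) {g : ℝ → ℝ} (hg : Continuous g)
    (s : ℝ) :
    Tendsto (fun r => ∫ u in r..s, g u * abelKernel α r s u) (𝓝[<] s)
      (𝓝 (g s * (Real.Gamma α * Real.Gamma (1 - α)))) := by
  have hk := intervalIntegrable_abelKernel h0 h1 zero_lt_one
  obtain ⟨C, hC⟩ := (isCompact_Icc (a := s - 1) (b := s)).exists_bound_of_continuousOn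
    hg.continuousOn
  have hnear : ∀ᶠ r in 𝓝[<] s, r ∈ Ioo (s - 1) s := Ioo_mem_nhdsLT (by linarith)
  rw [← integral_abelKernel_zero_one h0 h1, ← intervalIntegral.integral_const_mul]
  refine Tendsto.congr' (hnear.mono fun r hr => (integral_mul_abelKernel_eq hr.2 g).symm) ?_
  refine tendsto_integral_filter_of_dominated_convergence (fun t => C * ‖abelKernel α 0 1 t‖)
    (Eventually.of_forall fun r => ?_) (hnear.mono fun r hr => ?_) (hk.norm.const_mul C)
    (ae_of_all _ fun t _ => ?_)
  · exact ((hg.comp (by fun_prop)).aestronglyMeasurable).mul hk.def'.1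
  · refine ae_of_all _ fun t ht => ?_
    rw [uIoc_of_le zero_le_one] at ht
    rw [norm_mul]
    refine mul_le_mul_of_nonneg_right (hC _ ⟨?_, ?_⟩) (norm_nonneg _) <;>
      nlinarith [ht.1, ht.2, hr.1, hr.2]
  · refine ((hg.tendsto s).comp ?_).mul_const _
    refine tendsto_nhdsWithin_of_tendsto_nhds ?_
    exact (by fun_prop : Continuous fun r : ℝ => r + (s - r) * t).tendsto' s s (by simp)

end abelKernel

/-- The second summand of the fractional Brownian kernel `K^H(u, r)`, for `α = 1/2 - H`. -/
noncomputable def kernelCorrection (α r u : ℝ) : ℝ :=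
  ∫ θ in r..u, (θ - r) ^ (-α - 1) * (1 - (r / θ) ^ α)

section kernelCorrection

variable {α r : ℝ}

/-- `1 - (r/θ)^α ≤ 1 - r/θ ≤ (θ - r)/r` tames the non-integrable factor `(θ - r)^(-α-1)`. -/
lemma norm_rpow_mul_one_sub_div_rpow_le (h0 : 0 ≤ α) (h1 : α ≤ 1) (hr : 0 < r) {θ : ℝ}
    (hθ : r < θ) :
    ‖(θ - r) ^ (-α - 1) * (1 - (r / θ) ^ α)‖ ≤ (θ - r) ^ (-α) / r := by
  have hθr : 0 < θ - r := sub_pos.2 hθ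
  have hx0 : 0 ≤ r / θ := div_nonneg hr.le (hr.trans hθ).le
  have hx1 : r / θ ≤ 1 := (div_le_one (hr.trans hθ)).2 hθ.le
  have hlow : 0 ≤ 1 - (r / θ) ^ α := sub_nonneg.2 (Real.rpow_le_one hx0 hx1 h0)
  have hup : 1 - (r / θ) ^ α ≤ (θ - r) / r := by
    have h := Real.rpow_le_rpow_of_exponent_ge' hx0 hx1 h0 h1
    rw [Real.rpow_one] at h
    have h' : 1 - r / θ ≤ (θ - r) / r := by
      rw [one_sub_div (hr.trans hθ).ne']
      exact div_le_div_of_nonneg_left hθr.le hr hθ.le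
    linarith
  rw [norm_mul, Real.norm_of_nonneg (Real.rpow_nonneg hθr.le _), Real.norm_of_nonneg hlow]
  calc (θ - r) ^ (-α - 1) * (1 - (r / θ) ^ α) ≤ (θ - r) ^ (-α - 1) * ((θ - r) / r) :=
        mul_le_mul_of_nonneg_left hup (Real.rpow_nonneg hθr.le _)
    _ = (θ - r) ^ (-α) / r := by
        rw [mul_div_assoc', ← Real.rpow_add_one hθr.ne', sub_add_cancel]

lemma intervalIntegrable_kernelCorrection_integrand (h0 : 0 ≤ α) (h1 : α < 1) (hr : 0 < r)
    {s : ℝ} (hrs : r ≤ s) :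
    IntervalIntegrable (fun θ => (θ - r) ^ (-α - 1) * (1 - (r / θ) ^ α)) volume r s := by
  refine ((intervalIntegrable_rpow_sub (β := -α) (by linarith) r r s).div_const r).mono_fun' ?_ ?_
  · refine ContinuousOn.aestronglyMeasurable ?_ measurableSet_uIoc
    rw [uIoc_of_le hrs]
    refine ContinuousOn.mul ?_ ?_
    · exact ContinuousOn.rpow_const (by fun_prop) fun θ hθ => Or.inl (sub_pos.2 hθ.1).ne'
    · exact continuousOn_const.sub (ContinuousOn.rpow_const
        (continuousOn_const.div continuousOn_id fun θ hθ => (hr.trans hθ.1).ne')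
        fun _ _ => Or.inr h0)
  · rw [uIoc_of_le hrs]
    filter_upwards [ae_restrict_mem measurableSet_Ioc] with θ hθ
    exact norm_rpow_mul_one_sub_div_rpow_le h0 h1.le hr hθ.1

lemma continuousOn_kernelCorrection (h0 : 0 ≤ α) (h1 : α < 1) (hr : 0 < r) {s : ℝ}
    (hrs : r ≤ s) : ContinuousOn (kernelCorrection α r) (uIcc r s) :=
  continuousOn_primitive_interval' (intervalIntegrable_kernelCorrection_integrand h0 h1 hr hrs)
    left_mem_uIcc

lemma abs_kernelCorrection_le (h0 : 0 ≤ α) (h1 : α < 1) (hr : 0 < r) {u : ℝ} (hru : r ≤ u) :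
    |kernelCorrection α r u| ≤ (u - r) ^ (1 - α) / ((1 - α) * r) := by
  rw [← Real.norm_eq_abs, kernelCorrection]
  refine (norm_integral_le_of_norm_le hru ?_
    ((intervalIntegrable_rpow_sub (β := -α) (by linarith) r r u).div_const r)).trans_eq ?_
  · exact ae_of_all _ fun θ hθ => norm_rpow_mul_one_sub_div_rpow_le h0 h1.le hr hθ.1
  · rw [intervalIntegral.integral_div, integral_rpow_sub (β := -α) (by linarith), neg_add_eq_sub,
      div_div]

lemma tendsto_integral_mul_kernelCorrection (h0 : 0 < α) (h1 : α < 1) {g : ℝ → ℝ}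
    (hg : Continuous g) {s : ℝ} (hs : 0 < s) :
    Tendsto (fun r => ∫ u in r..s, g u * (s - u) ^ (α - 1) * kernelCorrection α r u) (𝓝[<] s)
      (𝓝 0) := by
  obtain ⟨C, hC⟩ := (isCompact_Icc (a := s / 2) (b := s)).exists_bound_of_continuousOn
    hg.continuousOn
  have hnear : ∀ᶠ r in 𝓝[<] s, r ∈ Ioo (s / 2) s := Ioo_mem_nhdsLT (by linarith)
  have hbound : Tendsto (fun r => C * (s - r) / ((1 - α) * α * r)) (𝓝[<] s) (𝓝 0) := by
    refine tendsto_nhdsWithin_of_tendsto_nhds ?_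
    have hc : ContinuousAt (fun r => C * (s - r) / ((1 - α) * α * r)) s :=
      by fun_prop (disch := exact mul_ne_zero (mul_ne_zero (by linarith) h0.ne') hs.ne')
    simpa using hc.tendsto
  refine squeeze_zero_norm' (hnear.mono fun r hr => ?_) hbound
  obtain ⟨hr, hrs⟩ := hr
  have hr0 : 0 < r := by linarith
  have hsr : 0 < s - r := sub_pos.2 hrs
  refine (norm_integral_le_of_norm_le hrs.le (ae_of_all _ fun u hu => ?_)
    ((intervalIntegrable_sub_rpow (β := α - 1) (by linarith) s r s).const_mul
      (C * ((s - r) ^ (1 - α) / ((1 - α) * r))))).trans_eq ?_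
  · have hsu : 0 ≤ s - u := sub_nonneg.2 hu.2
    rw [norm_mul, norm_mul, Real.norm_of_nonneg (Real.rpow_nonneg hsu _), mul_right_comm]
    refine mul_le_mul_of_nonneg_right (mul_le_mul (hC u ⟨by linarith [hu.1], hu.2⟩) ?_
      (norm_nonneg _) ((norm_nonneg _).trans (hC s ⟨by linarith, le_rfl⟩)))
      (Real.rpow_nonneg hsu _)
    refine (abs_kernelCorrection_le h0.le h1 hr0 hu.1.le).trans ?_
    gcongr <;> linarith [hu.1, hu.2]
  · rw [intervalIntegral.integral_const_mul, integral_sub_rpow (β := α - 1) (by linarith),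
      sub_add_cancel]
    have hpow : (s - r) ^ (1 - α) * (s - r) ^ α = s - r := by
      rw [← Real.rpow_add hsr, sub_add_cancel, Real.rpow_one]
    field_simp
    rw [mul_assoc, hpow]

end kernelCorrection

section kernel

variable {α c : ℝ} {K : ℝ → ℝ → ℝ}

lemma integral_mul_kernel_eq (h0 : 0 < α) (h1 : α < 1)
    (hK : ∀ u r, 0 < r → r ≤ u → K u r = c * (u - r) ^ (-α) + c * α * kernelCorrection α r u)
    {g : ℝ → ℝ} (hg : Continuous g) {r s : ℝ} (hr : 0 < r) (hrs : r < s) :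
    ∫ u in r..s, g u * (s - u) ^ (α - 1) * K u r
      = c * (∫ u in r..s, g u * abelKernel α r s u)
        + c * α * ∫ u in r..s, g u * (s - u) ^ (α - 1) * kernelCorrection α r u := by
  have habel : IntervalIntegrable (fun u => g u * abelKernel α r s u) volume r s :=
    (intervalIntegrable_abelKernel h0 h1 hrs).continuousOn_mul hg.continuousOn
  have hcorr : IntervalIntegrable
      (fun u => g u * (s - u) ^ (α - 1) * kernelCorrection α r u) volume r s :=
    ((intervalIntegrable_sub_rpow (β := α - 1) (by linarith) s r s).continuousOn_mul
      hg.continuousOn).mul_continuousOn (continuousOn_kernelCorrection h0.le h1 hr hrs.le)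
  rw [← intervalIntegral.integral_const_mul, ← intervalIntegral.integral_const_mul,
    ← integral_add (habel.const_mul c) (hcorr.const_mul (c * α))]
  refine integral_congr fun u hu => ?_
  rw [uIcc_of_le hrs.le] at hu
  simp only [hK u r hr hu.1, abelKernel]
  ring

lemma tendsto_integral_mul_kernel (h0 : 0 < α) (h1 : α < 1)
    (hK : ∀ u r, 0 < r → r ≤ u → K u r = c * (u - r) ^ (-α) + c * α * kernelCorrection α r u)
    {g : ℝ → ℝ} (hg : Continuous g) {s : ℝ} (hs : 0 < s) :
    Tendsto (fun r => ∫ u in r..s, g u * (s - u) ^ (α - 1) * K u r) (𝓝[<] s)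
      (𝓝 (c * Real.Gamma α * Real.Gamma (1 - α) * g s)) := by
  have hlim := ((tendsto_integral_mul_abelKernel h0 h1 hg s).const_mul c).add
    ((tendsto_integral_mul_kernelCorrection h0 h1 hg hs).const_mul (c * α))
  rw [mul_zero, add_zero, mul_comm (g s), ← mul_assoc, ← mul_assoc] at hlim
  have hnear : ∀ᶠ r in 𝓝[<] s, r ∈ Ioo 0 s := Ioo_mem_nhdsLT hs
  exact hlim.congr' (hnear.mono fun r hr => (integral_mul_kernel_eq h0 h1 hK hg hr.1 hr.2).symm)

end kernel

theorem trace_singular_case_general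
    (H α cH dH : ℝ) (hH : 1/4 < H) (hH2 : H < 1/2) (hα : α = 1/2 - H)
    (hdH : dH = cH * Real.Gamma (1 - α))
    (φ : ℝ → ℝ × ℝ) (by' : ℝ × ℝ → ℝ)
    (hbyc : Continuous fun u => by' (φ u))
    (K : ℝ → ℝ → ℝ)
    (hK : ∀ r u : ℝ, 0 < u → u ≤ r →
      K r u = cH * (r - u) ^ (H - 1/2) +
        cH * (1/2 - H) *
          ∫ θ in u..r, (θ - u) ^ (H - 3/2) * (1 - (u/θ) ^ (1/2 - H)))
    (f : ℝ → ℝ → ℝ)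
    (hf : ∀ s r : ℝ, f s r =
      (if r ≤ s then 1 else 0) * ((Real.Gamma α)⁻¹ * s ^ (-α) *
        ∫ u in r..s, u ^ α * by' (φ u) * (s - u) ^ (α - 1) * K u r))
    (ftil : ℝ → ℝ → ℝ)
    (hftil : ∀ s r, ftil s r = (f s r + f r s) / 2)
    (F : ℝ → ℝ)
    (hF : ∀ s ∈ Set.Ioc (0:ℝ) 1,
      Tendsto (fun r => ftil s r) (nhdsWithin s (Set.Ioo 0 s)) (nhds (F s))) :
    ∫ s in (0:ℝ)..1, F s = (dH / 2) * ∫ s in (0:ℝ)..1, by' (φ s) := by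
  have h0 : 0 < α := by linarith
  have h1 : α < 1 := by linarith
  have hK' : ∀ u r, 0 < r → r ≤ u →
      K u r = cH * (u - r) ^ (-α) + cH * α * kernelCorrection α r u := by
    intro u r hr hru
    rw [hK u r hr hru, kernelCorrection, hα]
    ring_nf
  have hg : Continuous fun u => u ^ α * by' (φ u) :=
    (Real.continuous_rpow_const h0.le).mul hbyc
  have hdiag : ∀ s ∈ Ioc (0:ℝ) 1, F s = dH / 2 * by' (φ s) := by
    intro s hs
    have hlim := ((tendsto_integral_mul_kernel h0 h1 hK' hg hs.1).const_mul
      ((Real.Gamma α)⁻¹ * s ^ (-α))).div_const 2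
    have hFs := hF s hs
    rw [nhdsWithin_Ioo_eq_nhdsLT hs.1] at hFs
    have hvalue : (Real.Gamma α)⁻¹ * s ^ (-α) *
        (cH * Real.Gamma α * Real.Gamma (1 - α) * (s ^ α * by' (φ s))) / 2
          = dH / 2 * by' (φ s) := by
      have hΓ : Real.Gamma α ≠ 0 := (Real.Gamma_pos_of_pos h0).ne'
      have hsα : s ^ α ≠ 0 := (Real.rpow_pos_of_pos hs.1 α).ne'
      rw [hdH, Real.rpow_neg hs.1.le]
      field_simp
    have hnear : ∀ᶠ r in 𝓝[<] s, r ∈ Ioo 0 s := Ioo_mem_nhdsLT hs.1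
    refine tendsto_nhds_unique hFs (hvalue ▸ hlim.congr' (hnear.mono fun r hr => ?_))
    simp [hftil, hf, hr.2.le, hr.2.not_ge]
  rw [integral_congr_ae (ae_of_all _ fun s hs =>
      hdiag s (by rwa [uIoc_of_le zero_le_one] at hs)),
    intervalIntegral.integral_const_mul]

/-- Trace identity for the symmetrized kernel in the singular case
(`H = 1/2 - α`, `1/4 < H < 1/2`). The diagonal values of the
symmetrization `f̃` are given as limits `F s`, and the trace
`∫ f̃(s,s) ds` equals `(d_H/2) ∫ b_y(φ_s) ds`. -/
theorem trace_singular_case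
    (H α cH dH M : ℝ) (hH : 1/4 < H) (hH2 : H < 1/2) (hα : α = 1/2 - H)
    (hcH : cH = Real.sqrt (2 * H * Real.Gamma (3/2 - H) /
      (Real.Gamma (H + 1/2) * Real.Gamma (2 - 2 * H))))
    (hdH : dH = cH * Real.Gamma (1 - α))
    (φ : ℝ → ℝ × ℝ) (by' : ℝ × ℝ → ℝ)
    (hby : ∀ p, |by' p| ≤ M)
    (hbyc : Continuous fun u => by' (φ u))
    (K : ℝ → ℝ → ℝ)
    (hK : ∀ r u : ℝ, 0 < u → u ≤ r →
      K r u = cH * (r - u) ^ (H - 1/2) +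
        cH * (1/2 - H) *
          ∫ θ in u..r, (θ - u) ^ (H - 3/2) * (1 - (u/θ) ^ (1/2 - H)))
    (f : ℝ → ℝ → ℝ)
    (hf : ∀ s r : ℝ, f s r =
      (if r ≤ s then 1 else 0) * ((Real.Gamma α)⁻¹ * s ^ (-α) *
        ∫ u in r..s, u ^ α * by' (φ u) * (s - u) ^ (α - 1) * K u r))
    (ftil : ℝ → ℝ → ℝ)
    (hftil : ∀ s r, ftil s r = (f s r + f r s) / 2)
    (F : ℝ → ℝ)
    (hF : ∀ s ∈ Set.Ioc (0:ℝ) 1,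
      Tendsto (fun r => ftil s r) (nhdsWithin s (Set.Ioo 0 s)) (nhds (F s))) :
    ∫ s in (0:ℝ)..1, F s = (dH / 2) * ∫ s in (0:ℝ)..1, by' (φ s) :=
  trace_singular_case_general H α cH dH hH hH2 hα hdH φ by' hbyc K hK f hf ftil hftil F hF
end
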